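/- Assume |d| > 2 and let r_j(d) = f_n(d)/(f_j(d)·f_{j+1}(d)) for 1 ≤ j ≤ n−1. Then ∑_{j=1}^{n−1} r_j(d) = f_{n−1}(d). -/

import Mathlib

noncomputable def f (d : ℝ) : ℕ → ℝ
  | 0 => 0
  | 1 => 1
  | (i + 2) => -d * f d (i + 1) - f d i

/-!
The addition formula `f (a + b + 1) = f (a + 1) f (b + 1) - f a f b`, taken with `a + b + 1 = n`
and `b = j`, splits each summand as `f n / (f j f (j + 1)) = g j - g (j + 1)` with
`g j = f (n - j) / f j`, so the sum telescopes to `g 1 - g n = f (n - 1)`.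
-/

lemma f_add_two (d : ℝ) (i : ℕ) : f d (i + 2) = -d * f d (i + 1) - f d i := rfl

lemma abs_f_add_one_le (d : ℝ) (hd : 2 ≤ |d|) : ∀ j, |f d j| + 1 ≤ |f d (j + 1)|
  | 0 => by simp [f]
  | j + 1 => by
    have ih := abs_f_add_one_le d hd j
    have h_tri : |d| * |f d (j + 1)| - |f d j| ≤ |f d (j + 2)| := by
      rw [f_add_two, ← abs_neg d, ← abs_mul]
      exact (abs_sub_abs_le_abs_sub _ _).trans_eq (by ring_nf)
    nlinarith [abs_nonneg (f d j)]

lemma f_ne_zero (d : ℝ) (hd : 2 ≤ |d|) {j : ℕ} (hj : j ≠ 0) : f d j ≠ 0 := by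
  obtain ⟨k, rfl⟩ := Nat.exists_eq_succ_of_ne_zero hj
  have h := abs_f_add_one_le d hd k
  intro h0
  rw [h0, abs_zero] at h
  linarith [abs_nonneg (f d k)]

lemma f_add (d : ℝ) (a : ℕ) :
    ∀ b, f d (a + b + 1) = f d (a + 1) * f d (b + 1) - f d a * f d b
  | 0 => by simp [f]
  | 1 => by simp only [f]; ring
  | b + 2 => by
    have h₀ := f_add d a b
    have h₁ := f_add d a (b + 1)
    rw [show a + (b + 2) + 1 = a + b + 1 + 2 by ring, f_add_two,
      show a + b + 1 + 1 = a + (b + 1) + 1 by ring, h₁, h₀, f_add_two d (b + 1), f_add_two d b]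
    ring

lemma f_div_mul_f_eq_sub (d : ℝ) (hd : 2 ≤ |d|) {n j : ℕ} (hj₀ : j ≠ 0) (hjn : j < n) :
    f d n / (f d j * f d (j + 1)) =
      f d (n - j) / f d j - f d (n - (j + 1)) / f d (j + 1) := by
  have hj₁ : f d (j + 1) ≠ 0 := f_ne_zero d hd (Nat.succ_ne_zero j)
  have hj : f d j ≠ 0 := f_ne_zero d hd hj₀
  have h_add := f_add d (n - (j + 1)) j
  rw [show n - (j + 1) + j + 1 = n by omega, show n - (j + 1) + 1 = n - j by omega] at h_add
  rw [h_add]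
  field_simp

theorem stmt_6 (d : ℝ) (hd : |d| > 2) (n : ℕ) (hn : 2 ≤ n) :
    ∑ j ∈ Finset.Icc 1 (n - 1), f d n / (f d j * f d (j + 1)) =
      f d (n - 1) := by
  set g : ℕ → ℝ := fun j ↦ -(f d (n - j) / f d j)
  have h_split : ∀ j ∈ Finset.Icc 1 (n - 1),
      f d n / (f d j * f d (j + 1)) = g (j + 1) - g j := by
    intro j hj
    rw [Finset.mem_Icc] at hj
    rw [f_div_mul_f_eq_sub d hd.le (by omega) (by omega)]
    ring
  rw [Finset.sum_congr rfl h_split, Finset.sum_Icc_sub (by omega),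
    show n - 1 + 1 = n by omega]
  simp [g, f]
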